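/- Let $\xi_{(0)}(z) = 2\sqrt{3}\,\arctan\!\Big(\frac{\sqrt{3}}{3+2z}\Big) + \log\!\Big(\frac{z^2}{z^2+3z+3}\Big)$ and let $a, b \in \mathbb{R}$. Then the function $z \mapsto a + b\,\xi_{(0)}(z)$ satisfies $\int_0^\infty \big(a + b\,\xi_{(0)}(z)\big)^2\,dz < \infty$ if and only if $a = 0$. In particular $\int_0^\infty \xi_{(0)}(z)^2\,dz < \infty$. -/

import Mathlib

open Set Real MeasureTheory

/-- The non-constant zero mode of the Sturm-Liouville problem for D3-branes on a resolved
conifold over `S⁵/ℤ₃`. -/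
noncomputable def xiZero (z : ℝ) : ℝ :=
  2 * Real.sqrt 3 * Real.arctan (Real.sqrt 3 / (3 + 2*z)) +
    Real.log (z^2 / (z^2 + 3*z + 3))

lemma quad_pos (z : ℝ) : 0 < z^2 + 3*z + 3 := by nlinarith [sq_nonneg (z + 3/2)]

lemma arctan_nonneg' {x : ℝ} (hx : 0 ≤ x) : 0 ≤ Real.arctan x := by
  have := Real.arctan_strictMono.monotone hx
  rwa [Real.arctan_zero] at this

lemma arctan_le_self' {x : ℝ} (hx : 0 ≤ x) : Real.arctan x ≤ x := by
  have h1 : 0 ≤ Real.arctan x := arctan_nonneg' hx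
  have h2 : Real.arctan x < π / 2 := Real.arctan_lt_pi_div_two x
  have := Real.le_tan h1 h2
  rwa [Real.tan_arctan] at this

lemma sqrt3_le_two : Real.sqrt 3 ≤ 2 := by
  rw [show (2:ℝ) = Real.sqrt 4 by rw [show (4:ℝ) = 2^2 by norm_num, Real.sqrt_sq]; norm_num]
  exact Real.sqrt_le_sqrt (by norm_num)

/-- decay bound at infinity -/
lemma xiZero_abs_le {z : ℝ} (hz : 1 ≤ z) : |xiZero z| ≤ 9 / z := by
  have hz0 : 0 < z := lt_of_lt_of_le one_pos hz
  have hq : 0 < z^2 + 3*z + 3 := quad_pos z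
  have hd : 0 < 3 + 2*z := by linarith
  have hs : 0 ≤ Real.sqrt 3 := Real.sqrt_nonneg 3
  have hss : Real.sqrt 3 * Real.sqrt 3 = 3 := Real.mul_self_sqrt (by norm_num)
  set A := 2 * Real.sqrt 3 * Real.arctan (Real.sqrt 3 / (3 + 2*z)) with hA
  set L := Real.log (z^2 / (z^2 + 3*z + 3)) with hL
  -- arctan part
  have harg : 0 ≤ Real.sqrt 3 / (3 + 2*z) := div_nonneg hs hd.le
  have hA0 : 0 ≤ A := by
    apply mul_nonneg (by positivity) (arctan_nonneg' harg)
  have hA1 : A ≤ 3 / z := by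
    have h1 : Real.arctan (Real.sqrt 3 / (3 + 2*z)) ≤ Real.sqrt 3 / (3 + 2*z) :=
      arctan_le_self' harg
    have h2 : A ≤ 2 * Real.sqrt 3 * (Real.sqrt 3 / (3 + 2*z)) := by
      apply mul_le_mul_of_nonneg_left h1 (by positivity)
    have h3 : 2 * Real.sqrt 3 * (Real.sqrt 3 / (3 + 2*z)) = 6 / (3 + 2*z) := by
      field_simp
      nlinarith [hss]
    rw [h3] at h2
    refine h2.trans ?_
    rw [div_le_div_iff₀ hd hz0]
    nlinarith
  -- log part
  have hL0 : L ≤ 0 := by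
    apply Real.log_nonpos (by positivity)
    rw [div_le_one hq]; nlinarith
  have hL1 : -(6 / z) ≤ L := by
    have hrw : L = -Real.log ((z^2 + 3*z + 3) / z^2) := by
      rw [hL, ← Real.log_inv]
      congr 1
      field_simp
    rw [hrw, neg_le_neg_iff]
    have h1 : Real.log ((z^2 + 3*z + 3) / z^2) ≤ (z^2 + 3*z + 3) / z^2 - 1 :=
      Real.log_le_sub_one_of_pos (by positivity)
    refine h1.trans ?_
    rw [div_sub_one (by positivity), div_le_div_iff₀ (by positivity) hz0]
    nlinarith
  rw [abs_le]
  constructor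
  · have : -(9/z) ≤ -(6/z) := by
      rw [neg_le_neg_iff, div_le_div_iff₀ hz0 hz0]; nlinarith
    show -(9/z) ≤ A + L
    linarith
  · have : (3:ℝ)/z ≤ 9/z := by
      rw [div_le_div_iff₀ hz0 hz0]; nlinarith
    show A + L ≤ 9/z
    linarith

/-- bound near zero -/
lemma xiZero_sq_le {z : ℝ} (hz : 0 < z) (hz1 : z ≤ 1) :
    (xiZero z)^2 ≤ 520 * z ^ (-(1/2) : ℝ) := by
  have hq : 0 < z^2 + 3*z + 3 := quad_pos z
  have hd : 0 < 3 + 2*z := by linarith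
  have hs : 0 ≤ Real.sqrt 3 := Real.sqrt_nonneg 3
  set A := 2 * Real.sqrt 3 * Real.arctan (Real.sqrt 3 / (3 + 2*z)) with hA
  set L := Real.log (z^2 / (z^2 + 3*z + 3)) with hL
  have hxi : xiZero z = A + L := rfl
  -- |A| ≤ 8
  have hAabs : |A| ≤ 8 := by
    have h1' : |Real.arctan (Real.sqrt 3 / (3 + 2*z))| ≤ π / 2 := by
      rw [abs_le]
      exact ⟨(Real.arctan_mem_Ioo _).1.le, (Real.arctan_mem_Ioo _).2.le⟩
    have hpi : π / 2 ≤ 2 := by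
      have := Real.pi_le_four; linarith
    calc |A| = 2 * Real.sqrt 3 * |Real.arctan (Real.sqrt 3 / (3 + 2*z))| := by
          rw [hA, abs_mul, abs_of_nonneg (by positivity : (0:ℝ) ≤ 2 * Real.sqrt 3)]
      _ ≤ 2 * 2 * 2 := by
          apply mul_le_mul (by nlinarith [sqrt3_le_two]) (h1'.trans hpi) (abs_nonneg _)
            (by norm_num)
      _ = 8 := by norm_num
  -- L = 2 log z - log q
  have hLrw : L = 2 * Real.log z - Real.log (z^2 + 3*z + 3) := by
    rw [hL, Real.log_div (by positivity) (ne_of_gt hq), Real.log_pow]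
    push_cast; ring
  have hlogq0 : 0 ≤ Real.log (z^2 + 3*z + 3) := Real.log_nonneg (by nlinarith)
  have hlogq6 : Real.log (z^2 + 3*z + 3) ≤ 6 := by
    have := Real.log_le_sub_one_of_pos hq
    nlinarith
  have hlogz : Real.log z ≤ 0 := Real.log_nonpos hz.le hz1
  -- |xiZero z| ≤ 14 + 2 * (-log z)
  have hmain : |xiZero z| ≤ 14 + 2 * (-Real.log z) := by
    rw [hxi, hLrw]
    rw [abs_le] at hAabs ⊢
    constructor <;> nlinarith [hAabs.1, hAabs.2]
  -- (log z)^2 ≤ 16 * z^(-1/2)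
  have hw : (Real.log z)^2 ≤ 16 * z ^ (-(1/2) : ℝ) := by
    set w := z ^ (-(1/4) : ℝ) with hwdef
    have hw0 : 0 < w := Real.rpow_pos_of_pos hz _
    have hlogw : Real.log w = -(1/4) * Real.log z := Real.log_rpow hz _
    have hlogwle : Real.log w ≤ w := (Real.log_le_sub_one_of_pos hw0).trans (by linarith)
    have hlogwnn : 0 ≤ Real.log w := by rw [hlogw]; nlinarith
    have hwsq : w^2 = z ^ (-(1/2) : ℝ) := by
      rw [hwdef, ← Real.rpow_natCast (z ^ (-(1/4):ℝ)) 2, ← Real.rpow_mul hz.le]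
      norm_num
    have h1 : (Real.log w)^2 ≤ w^2 := by nlinarith
    rw [hlogw] at h1
    rw [← hwsq]
    nlinarith
  have hz12 : (1:ℝ) ≤ z ^ (-(1/2) : ℝ) :=
    Real.one_le_rpow_of_pos_of_le_one_of_nonpos hz hz1 (by norm_num)
  have habs : (xiZero z)^2 ≤ (14 + 2 * (-Real.log z))^2 := by
    have := abs_nonneg (xiZero z)
    nlinarith [sq_abs (xiZero z), hmain, neg_nonneg.mpr hlogz]
  nlinarith [habs, hw, hz12, neg_nonneg.mpr hlogz]

lemma xiZero_continuousOn : ContinuousOn xiZero (Ioi 0) := by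
  intro z hz
  have hz0 : (0:ℝ) < z := hz
  have hq : 0 < z^2 + 3*z + 3 := quad_pos z
  have hd : (0:ℝ) < 3 + 2*z := by linarith
  apply ContinuousAt.continuousWithinAt
  apply ContinuousAt.add
  · apply ContinuousAt.mul continuousAt_const
    exact Real.continuous_arctan.continuousAt.comp
      (ContinuousAt.div continuousAt_const (by fun_prop) (ne_of_gt hd))
  · apply ContinuousAt.comp (Real.continuousAt_log (by positivity))
    exact ContinuousAt.div (by fun_prop) (by fun_prop) (ne_of_gt hq)

lemma xiZero_sq_integrable : IntegrableOn (fun z => (xiZero z)^2) (Ioi 0) := by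
  have hcont : ContinuousOn (fun z => (xiZero z)^2) (Ioi 0) := xiZero_continuousOn.pow 2
  have h1 : IntegrableOn (fun z => (xiZero z)^2) (Ioc 0 1) := by
    have hg : IntegrableOn (fun z : ℝ => 520 * z ^ (-(1/2) : ℝ)) (Ioc 0 1) := by
      have : IntervalIntegrable (fun x : ℝ => x ^ (-(1/2) : ℝ)) volume 0 1 :=
        intervalIntegral.intervalIntegrable_rpow' (by norm_num)
      rw [intervalIntegrable_iff_integrableOn_Ioc_of_le (by norm_num : (0:ℝ) ≤ 1)] at this
      exact this.const_mul 520
    apply Integrable.mono' hg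
    · exact (hcont.mono Ioc_subset_Ioi_self).aestronglyMeasurable measurableSet_Ioc
    · filter_upwards [ae_restrict_mem measurableSet_Ioc] with z hzmem
      rw [Real.norm_eq_abs, abs_of_nonneg (sq_nonneg _)]
      exact xiZero_sq_le hzmem.1 hzmem.2
  have h2 : IntegrableOn (fun z => (xiZero z)^2) (Ioi 1) := by
    have hg : IntegrableOn (fun z : ℝ => 81 * z ^ (-2 : ℝ)) (Ioi 1) :=
      (integrableOn_Ioi_rpow_of_lt (by norm_num) one_pos).const_mul 81
    apply Integrable.mono' hg
    · exact (hcont.mono (Ioi_subset_Ioi (by norm_num))).aestronglyMeasurable measurableSet_Ioi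
    · filter_upwards [ae_restrict_mem measurableSet_Ioi] with z hzmem
      have hz1 : (1:ℝ) ≤ z := le_of_lt hzmem
      have hz0 : (0:ℝ) < z := lt_of_lt_of_le one_pos hz1
      rw [Real.norm_eq_abs, abs_of_nonneg (sq_nonneg _)]
      have h := xiZero_abs_le hz1
      have hrp : z ^ (-2 : ℝ) = (z^2)⁻¹ := by
        rw [show (-2:ℝ) = -((2:ℕ):ℝ) by norm_num, Real.rpow_neg hz0.le,
          Real.rpow_natCast]
      rw [hrp]
      have h2 : (xiZero z)^2 ≤ (9/z)^2 := by
        nlinarith [abs_nonneg (xiZero z), sq_abs (xiZero z)]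
      refine h2.trans (le_of_eq ?_)
      field_simp
      norm_num
  have := h1.union h2
  rwa [Ioc_union_Ioi_eq_Ioi (by norm_num : (0:ℝ) ≤ 1)] at this

/-- A zero mode `a + b ξ₀` is square-integrable on `(0,∞)` (with measure `dz`) iff
`a = 0`; in particular `ξ₀` itself is square-integrable. -/
theorem xiZero_normalisability (a b : ℝ) :
    (IntegrableOn (fun z => (a + b * xiZero z)^2) (Ioi 0) ↔ a = 0) ∧
      IntegrableOn (fun z => (xiZero z)^2) (Ioi 0) := by
  refine ⟨⟨fun hInt => ?_, fun ha => ?_⟩, xiZero_sq_integrable⟩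
  · -- forward: integrable → a = 0
    by_contra ha
    have ha' : 0 < |a| := abs_pos.mpr ha
    set M : ℝ := max 1 (18 * |b| / |a|) with hM
    have hM1 : (1:ℝ) ≤ M := le_max_left _ _
    have hM0 : (0:ℝ) ≤ M := by linarith
    have hbound : ∀ z ∈ Ioi M, a^2/4 ≤ (a + b * xiZero z)^2 := by
      intro z hzM
      have hz1 : (1:ℝ) ≤ z := hM1.trans (le_of_lt hzM)
      have hz0 : (0:ℝ) < z := lt_of_lt_of_le one_pos hz1
      have hxi : |xiZero z| ≤ 9 / z := xiZero_abs_le hz1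
      have hzM' : 18 * |b| / |a| < z := (le_max_right _ _).trans_lt hzM
      have h18 : 18 * |b| < z * |a| := by rwa [div_lt_iff₀ ha'] at hzM'
      set u := b * xiZero z with hu
      have hu' : |u| ≤ |a| / 2 := by
        have h1 : |u| = |b| * |xiZero z| := abs_mul _ _
        have h2 : |b| * |xiZero z| ≤ |b| * (9 / z) :=
          mul_le_mul_of_nonneg_left hxi (abs_nonneg b)
        have h3 : |b| * (9 / z) ≤ |a| / 2 := by
          rw [show |b| * (9/z) = 9*|b|/z by ring,
            div_le_div_iff₀ hz0 (by norm_num : (0:ℝ) < 2)]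
          nlinarith
        linarith [h1.le, h2, h3, h1.ge]
      have habs : |a| / 2 ≤ |a + u| := by
        have h4 : |a| ≤ |a + u| + |u| := by
          have := abs_add_le (a + u) (-u)
          simpa using this
        linarith
      nlinarith [sq_abs (a + u), sq_abs a, abs_nonneg (a + u), abs_nonneg a]
    have hIntM : IntegrableOn (fun z => (a + b * xiZero z)^2) (Ioi M) :=
      hInt.mono_set (Ioi_subset_Ioi hM0)
    have hconst : IntegrableOn (fun _ : ℝ => a^2/4) (Ioi M) := by
      apply Integrable.mono' hIntM aestronglyMeasurable_const
      filter_upwards [ae_restrict_mem measurableSet_Ioi] with z hz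
      rw [Real.norm_eq_abs, abs_of_nonneg (by positivity)]
      exact hbound z hz
    rw [integrableOn_const_iff] at hconst
    rcases hconst with h | h
    · have h' : a^2/4 = 0 := enorm_eq_zero.mp h
      exact ha (by nlinarith [sq_nonneg a])
    · rw [Real.volume_Ioi] at h
      exact absurd h (by simp)
  · subst ha
    have := xiZero_sq_integrable.const_mul (b^2)
    apply this.congr
    filter_upwards with z
    ring
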